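/- arXiv:2101.01351 — 3 statements merged into one kernel-verified Lean document; each statement's English description precedes it below -/
import Mathlib

section
/- Let I = ∫₀⁸ (3−x) · ∏_{γ∈C} ( ⟨xω₁+(8−x)ω₃, γ⟩ / ⟨ρ, γ⟩ ) dx (an integral of a rational function of x over [0,8], the denominator being a nonzero constant). Then 23 · 22! · I = 2⁷³·19·23·199·1049; in particular 23 · 22! · I > 0. (This quantity is the invariant ξ(Z) = β(E) for the Pasquier two-orbits variety Pas_{F₄}, whose positivity proves that Pas_{F₄} is K-polystable and hence admits a Kähler–Einstein metric.) -/
open scoped InnerProductSpace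

noncomputable section

namespace PasquierF4

/-- ℝ⁴ with its standard Euclidean inner product. -/
abbrev V : Type := EuclideanSpace ℝ (Fin 4)

/-- The standard basis vectors e₁, e₂, e₃, e₄ (indexed by `Fin 4`). -/
def e (i : Fin 4) : V := EuclideanSpace.single i 1

/-- The simple roots of F₄. -/
def α₁ : V := e 1 - e 2
def α₂ : V := e 2 - e 3
def α₃ : V := e 3
def α₄ : V := (1 / 2 : ℝ) • (e 0 - e 1 - e 2 - e 3)

/-- `rt a b c d` is the vector [a,b,c,d] = aα₁ + bα₂ + cα₃ + dα₄. -/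
def rt (a b c d : ℝ) : V := a • α₁ + b • α₂ + c • α₃ + d • α₄

/-- The fundamental weights of F₄. -/
def ω₁ : V := rt 2 3 4 2
def ω₂ : V := rt 3 6 8 4
def ω₃ : V := rt 2 4 6 3
def ω₄ : V := rt 1 2 3 2

/-- The half-sum of positive roots ρ = [8,15,21,11]. -/
def ρ : V := rt 8 15 21 11

/-- The 24 positive roots of F₄. -/
def PhiPlus : List V :=
  [rt 1 0 0 0, rt 0 1 0 0, rt 0 0 1 0, rt 0 0 0 1, rt 1 1 0 0, rt 0 1 1 0,
   rt 0 0 1 1, rt 1 1 1 0, rt 0 1 1 1, rt 1 1 1 1, rt 0 1 2 0, rt 1 1 2 0,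
   rt 0 1 2 1, rt 1 2 2 0, rt 1 1 2 1, rt 0 1 2 2, rt 1 2 2 1, rt 1 1 2 2,
   rt 1 2 3 1, rt 1 2 2 2, rt 1 2 3 2, rt 1 2 4 2, rt 1 3 4 2, rt 2 3 4 2]

/-- The 22 complementary roots: Φ⁺ with α₂ = [0,1,0,0] and α₄ = [0,0,0,1] removed. -/
def C : List V :=
  [rt 1 0 0 0, rt 0 0 1 0, rt 1 1 0 0, rt 0 1 1 0,
   rt 0 0 1 1, rt 1 1 1 0, rt 0 1 1 1, rt 1 1 1 1, rt 0 1 2 0, rt 1 1 2 0,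
   rt 0 1 2 1, rt 1 2 2 0, rt 1 1 2 1, rt 0 1 2 2, rt 1 2 2 1, rt 1 1 2 2,
   rt 1 2 3 1, rt 1 2 2 2, rt 1 2 3 2, rt 1 2 4 2, rt 1 3 4 2, rt 2 3 4 2]

/-!
In root coordinates `x • ω₁ + (8 - x) • ω₃ = [16, 32 - x, 48 - 2x, 24 - x]`, so every factor
`⟪x • ω₁ + (8 - x) • ω₃, γ⟫ / ⟪ρ, γ⟫` is affine in `x`; seven of them are constant and the others
vanish at `x = 0, 8, -8, 16, 24`. The integrand is therefore an explicit polynomial of degree 16,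
which is integrated termwise.
-/

lemma inner_rt (a b c d a' b' c' d' : ℝ) :
    ⟪rt a b c d, rt a' b' c' d'⟫_ℝ =
      d / 2 * (d' / 2) + (a - d / 2) * (a' - d' / 2) + (b - a - d / 2) * (b' - a' - d' / 2) +
        (c - b - d / 2) * (c' - b' - d' / 2) := by
  simp only [rt, α₁, e, Fin.isValue, α₂, α₃, α₄, one_div, PiLp.inner_apply, PiLp.add_apply,
    PiLp.smul_apply, PiLp.sub_apply, PiLp.single_apply, smul_eq_mul, mul_ite, mul_one, mul_zero,
    RCLike.inner_apply, Real.ringHom_apply, Fin.sum_univ_four, zero_ne_one, ↓reduceIte,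
    Fin.reduceEq, sub_self, add_zero, sub_zero, zero_add, one_ne_zero, zero_sub, mul_neg]
  ring

lemma smul_ω₁_add_smul_ω₃ (x : ℝ) :
    x • ω₁ + (8 - x) • ω₃ = rt 16 (32 - x) (48 - 2 * x) (24 - x) := by
  simp only [ω₁, ω₃, rt]
  module

lemma prod_C_inner_div_inner_ρ (x : ℝ) :
    (C.map fun γ => ⟪x • ω₁ + (8 - x) • ω₃, γ⟫_ℝ / ⟪ρ, γ⟫_ℝ).prod =
      1024 / 736745625 * (x ^ 2 * (8 - x) ^ 7 * (8 + x) ^ 2 * (16 - x) ^ 2 * (24 - x) ^ 2) := by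
  simp only [C, ρ, smul_ω₁_add_smul_ω₃, List.map_cons, List.map_nil, List.prod_cons,
    List.prod_nil, inner_rt]
  ring

lemma integral_xi_polynomial :
    ∫ x in (0 : ℝ)..8, (3 - x) * (x ^ 2 * (8 - x) ^ 7 * (8 + x) ^ 2 * (16 - x) ^ 2 * (24 - x) ^ 2)
      = 3672386428957884416 / 153153 := by
  conv_lhs => arg 1; ext x; ring_nf
  simp (disch := apply Continuous.intervalIntegrable; fun_prop) only
    [intervalIntegral.integral_add, intervalIntegral.integral_sub,
      intervalIntegral.integral_mul_const, integral_pow]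
  norm_num

/-- ξ(Z) = 23 · 22! · I for Pas_{F₄} equals 2⁷³·19·23·199·1049 > 0, where
I = ∫₀⁸ (3−x) ∏_{γ∈C} (⟨xω₁+(8−x)ω₃, γ⟩ / ⟨ρ, γ⟩) dx. -/
theorem xi_F4_positive :
    (23 : ℝ) * (Nat.factorial 22 : ℝ) *
        (∫ x in (0 : ℝ)..8, (3 - x) *
          (C.map fun γ => ⟪x • ω₁ + (8 - x) • ω₃, γ⟫_ℝ / ⟪ρ, γ⟫_ℝ).prod)
      = 2 ^ 73 * 19 * 23 * 199 * 1049 ∧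
    0 < (23 : ℝ) * (Nat.factorial 22 : ℝ) *
        (∫ x in (0 : ℝ)..8, (3 - x) *
          (C.map fun γ => ⟪x • ω₁ + (8 - x) • ω₃, γ⟫_ℝ / ⟪ρ, γ⟫_ℝ).prod) := by
  have hξ : (23 : ℝ) * (Nat.factorial 22 : ℝ) *
      (∫ x in (0 : ℝ)..8, (3 - x) *
        (C.map fun γ => ⟪x • ω₁ + (8 - x) • ω₃, γ⟫_ℝ / ⟪ρ, γ⟫_ℝ).prod)
      = 2 ^ 73 * 19 * 23 * 199 * 1049 := by
    simp only [prod_C_inner_div_inner_ρ, mul_left_comm _ (1024 / 736745625 : ℝ),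
      intervalIntegral.integral_const_mul, integral_xi_polynomial]
    norm_num [Nat.factorial]
  exact ⟨hξ, hξ ▸ by norm_num⟩

end PasquierF4
end
end

section
/- (23 · 22! · 2¹⁴) / (2⁴·3⁷·5⁴·7²·11) · ∫₀⁸ x²(x−3)(x−8)⁷(x+8)²(x−24)²(x−16)² dx = 2⁷³·19·23·199·1049. In particular ∫₀⁸ x²(x−3)(x−8)⁷(x+8)²(x−24)²(x−16)² dx > 0. -/
/-! Expanding the integrand into monomials and integrating termwise gives
`∫₀⁸ … = 3672386428957884416 / 153153`; both claims are then rational arithmetic. -/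

open Finset

theorem intervalIntegral.integral_finsetSum_mul_pow (c : ℕ → ℝ) (n : ℕ) (a b : ℝ) :
    ∫ x in a..b, ∑ k ∈ range n, c k * x ^ k
      = ∑ k ∈ range n, c k * ((b ^ (k + 1) - a ^ (k + 1)) / (k + 1)) := by
  rw [intervalIntegral.integral_finsetSum (f := fun k x => c k * x ^ k)
    fun k _ => (continuous_const.mul (continuous_pow k)).intervalIntegrable a b]
  simp only [intervalIntegral.integral_const_mul, integral_pow]

/-- Coefficients of the expanded integrand, constant term first. -/
def xiIntegrandCoeffs : List ℝ :=
  [0, 0, 59373627899904, -69269232549888, 32598801776640, -7543036313600, 661559181312,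
    84439728128, -29615980544, 3122135040, -47251456, -24174592, 3030528, -184640, 6440, -123, 1]

theorem xiIntegrand_eq_sum (x : ℝ) :
    x ^ 2 * (x - 3) * (x - 8) ^ 7 * (x + 8) ^ 2 * (x - 24) ^ 2 * (x - 16) ^ 2
      = ∑ k ∈ range 17, xiIntegrandCoeffs.getD k 0 * x ^ k := by
  simp only [xiIntegrandCoeffs, sum_range_succ, sum_range_zero, List.getD_cons_succ,
    List.getD_cons_zero]
  ring

theorem xiIntegral_eq :
    ∫ x in (0 : ℝ)..8, x ^ 2 * (x - 3) * (x - 8) ^ 7 * (x + 8) ^ 2 * (x - 24) ^ 2 * (x - 16) ^ 2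
      = 3672386428957884416 / 153153 := by
  simp only [xiIntegrand_eq_sum, intervalIntegral.integral_finsetSum_mul_pow]
  norm_num [xiIntegrandCoeffs, sum_range_succ]

/-- (23 · 22! · 2¹⁴)/(2⁴·3⁷·5⁴·7²·11) · ∫₀⁸ x²(x−3)(x−8)⁷(x+8)²(x−24)²(x−16)² dx
    = 2⁷³·19·23·199·1049; in particular the integral is positive. -/
theorem xi_F4_integral :
    ((23 : ℝ) * (Nat.factorial 22 : ℝ) * 2 ^ 14) / (2 ^ 4 * 3 ^ 7 * 5 ^ 4 * 7 ^ 2 * 11) *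
        (∫ x in (0 : ℝ)..8,
          x ^ 2 * (x - 3) * (x - 8) ^ 7 * (x + 8) ^ 2 * (x - 24) ^ 2 * (x - 16) ^ 2)
      = 2 ^ 73 * 19 * 23 * 199 * 1049 ∧
    0 < ∫ x in (0 : ℝ)..8,
          x ^ 2 * (x - 3) * (x - 8) ^ 7 * (x + 8) ^ 2 * (x - 24) ^ 2 * (x - 16) ^ 2 := by
  rw [xiIntegral_eq]
  exact ⟨by norm_num [Nat.factorial], by norm_num⟩
end

section
/- (−8 · 7! · 2³·3⁴) / (2³·3⁴·5) · ∫₀³ x(x−2)(x−3)²(x−6)(x+6)(x−12) dx = 2⁴·3⁹·5·11. In particular ∫₀³ x(x−2)(x−3)²(x−6)(x+6)(x−12) dx < 0. -/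
/-- Termwise antiderivative of the expanded integrand
`x⁷ - 20x⁶ + 81x⁵ + 450x⁴ - 3996x³ + 9720x² - 7776x`. -/
noncomputable def xiAntideriv (x : ℝ) : ℝ :=
  x ^ 8 / 8 - 20 / 7 * x ^ 7 + 27 / 2 * x ^ 6 + 90 * x ^ 5 - 999 * x ^ 4 + 3240 * x ^ 3
    - 3888 * x ^ 2

lemma hasDerivAt_xiAntideriv (x : ℝ) :
    HasDerivAt xiAntideriv (x * (x - 2) * (x - 3) ^ 2 * (x - 6) * (x + 6) * (x - 12)) x := by
  have h := ((((((((hasDerivAt_pow 8 x).div_const 8).sub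
    ((hasDerivAt_pow 7 x).const_mul (20 / 7 : ℝ))).add
    ((hasDerivAt_pow 6 x).const_mul (27 / 2 : ℝ))).add
    ((hasDerivAt_pow 5 x).const_mul (90 : ℝ))).sub
    ((hasDerivAt_pow 4 x).const_mul (999 : ℝ))).add
    ((hasDerivAt_pow 3 x).const_mul (3240 : ℝ))).sub
    ((hasDerivAt_pow 2 x).const_mul (3888 : ℝ)))
  refine h.congr_deriv ?_
  push_cast
  ring

lemma integral_xi_integrand :
    ∫ x in (0 : ℝ)..3, x * (x - 2) * (x - 3) ^ 2 * (x - 6) * (x + 6) * (x - 12)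
      = -120285 / 56 := by
  rw [intervalIntegral.integral_eq_sub_of_hasDerivAt (fun x _ => hasDerivAt_xiAntideriv x)
    (by apply Continuous.intervalIntegrable; fun_prop)]
  norm_num [xiAntideriv]

/-- (−8 · 7! · 2³·3⁴)/(2³·3⁴·5) · ∫₀³ x(x−2)(x−3)²(x−6)(x+6)(x−12) dx
    = 2⁴·3⁹·5·11; in particular the integral is negative. -/
theorem xi_A1G2_integral :
    (-8 : ℝ) * (Nat.factorial 7 : ℝ) * (2 ^ 3 * 3 ^ 4) / (2 ^ 3 * 3 ^ 4 * 5) *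
        (∫ x in (0 : ℝ)..3,
          x * (x - 2) * (x - 3) ^ 2 * (x - 6) * (x + 6) * (x - 12))
      = 2 ^ 4 * 3 ^ 9 * 5 * 11 ∧
    (∫ x in (0 : ℝ)..3,
      x * (x - 2) * (x - 3) ^ 2 * (x - 6) * (x + 6) * (x - 12)) < 0 := by
  rw [integral_xi_integrand]
  norm_num [Nat.factorial]
end
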